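/- Let λ ∈ ℂ^I, fix i ∈ I, and let (s,s') ∈ S(d,v) × S(d,v') satisfy conditions (1)–(5) in the definition of Z_i^λ(d,v). Then: (a) s ∈ Λ_λ(d,v) if and only if s' ∈ Λ_{λ'}(d,v'); (b) if μ_j(s) = λ_j·Id_{V_j} for all j ≠ i, then s ∈ Λ_λ(d,v); (c) if μ_j(s') = λ'_j·Id_{V'_j} for all j ≠ i, then s' ∈ Λ_{λ'}(d,v'). -/

import Mathlib

open scoped BigOperators

noncomputable section

structure QuiverShape (I Hh : Type) : Type where
  src : Hh → I
  tgt : Hh → I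
  noloop : ∀ h, src h ≠ tgt h
  rev : Hh → Hh
  rev_ne : ∀ h, rev h ≠ h
  rev_rev : ∀ h, rev (rev h) = h
  src_rev : ∀ h, src (rev h) = tgt h
  tgt_rev : ∀ h, tgt (rev h) = src h
  eps : Hh → ℂ
  eps_pm : ∀ h, eps h = 1 ∨ eps h = -1
  eps_rev : ∀ h, eps (rev h) = - eps h

namespace QuiverShape

variable {I Hh : Type}

/-- The representation space `S(d,v)`: a triple `(B, γ, δ)`. -/
abbrev Rep (Q : QuiverShape I Hh) (d v : I → ℕ) : Type :=
  ((h : Hh) → Matrix (Fin (v (Q.tgt h))) (Fin (v (Q.src h))) ℂ)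
  × ((i : I) → Matrix (Fin (v i)) (Fin (d i)) ℂ)
  × ((i : I) → Matrix (Fin (d i)) (Fin (v i)) ℂ)

/-- The group `G_v = ∏ᵢ GL(Vᵢ)`. -/
abbrev GV (v : I → ℕ) : Type := (i : I) → (Matrix (Fin (v i)) (Fin (v i)) ℂ)ˣ

/-- The action of `G_v` on `S(d,v)`. -/
def act (Q : QuiverShape I Hh) {d v : I → ℕ} (g : GV v) (s : Q.Rep d v) : Q.Rep d v :=
  ⟨fun h => ((g (Q.tgt h) : Matrix (Fin (v (Q.tgt h))) (Fin (v (Q.tgt h))) ℂ) * s.1 h) *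
      (((g (Q.src h))⁻¹ : (Matrix (Fin (v (Q.src h))) (Fin (v (Q.src h))) ℂ)ˣ) :
        Matrix (Fin (v (Q.src h))) (Fin (v (Q.src h))) ℂ),
   fun i => (g i : Matrix (Fin (v i)) (Fin (v i)) ℂ) * s.2.1 i,
   fun i => s.2.2 i * (((g i)⁻¹ : (Matrix (Fin (v i)) (Fin (v i)) ℂ)ˣ) : Matrix (Fin (v i)) (Fin (v i)) ℂ)⟩

/-- `B_{h̄}`, pulled back to a matrix `V_{h₁} → V_{h₀}` via the identities
`(h̄)₀ = h₁`, `(h̄)₁ = h₀`. -/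
def Bbar (Q : QuiverShape I Hh) {d v : I → ℕ} (s : Q.Rep d v) (h : Hh) :
    Matrix (Fin (v (Q.src h))) (Fin (v (Q.tgt h))) ℂ :=
  Matrix.reindex (finCongr (congrArg v (Q.tgt_rev h))) (finCongr (congrArg v (Q.src_rev h)))
    (s.1 (Q.rev h))

/-- The `i`-th component of the moment map:
`μᵢ(s) = ∑_{h : h₁ = i} ε(h) B_h B_{h̄} + γᵢ δᵢ`. -/
def mu (Q : QuiverShape I Hh) [Fintype Hh] [DecidableEq I] {d v : I → ℕ}
    (s : Q.Rep d v) (i : I) : Matrix (Fin (v i)) (Fin (v i)) ℂ :=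
  (∑ h : {h : Hh // Q.tgt h = i},
      Q.eps h.1 • (Matrix.reindex (finCongr (congrArg v h.2)) (finCongr (congrArg v h.2))
        (s.1 h.1 * Q.Bbar s h.1)))
  + s.2.1 i * s.2.2 i

/-- `Λ_λ(d,v) = μ⁻¹(λ)`. -/
def lamSet (Q : QuiverShape I Hh) [Fintype Hh] [DecidableEq I] (lam : I → ℂ) (d v : I → ℕ) :
    Set (Q.Rep d v) :=
  {s | ∀ i, Q.mu s i = lam i • (1 : Matrix (Fin (v i)) (Fin (v i)) ℂ)}

/-- Index type for the coordinates (matrix entries) of `S(d,v)`. -/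
abbrev Coord (Q : QuiverShape I Hh) (d v : I → ℕ) : Type :=
  ((h : Hh) × (Fin (v (Q.tgt h)) × Fin (v (Q.src h))))
  ⊕ (((i : I) × (Fin (v i) × Fin (d i)))
  ⊕ ((i : I) × (Fin (d i) × Fin (v i))))

/-- The coordinates of a point of `S(d,v)`. -/
def coords (Q : QuiverShape I Hh) {d v : I → ℕ} (s : Q.Rep d v) : Q.Coord d v → ℂ
  | Sum.inl ⟨h, rc⟩ => s.1 h rc.1 rc.2
  | Sum.inr (Sum.inl ⟨i, rc⟩) => s.2.1 i rc.1 rc.2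
  | Sum.inr (Sum.inr ⟨i, rc⟩) => s.2.2 i rc.1 rc.2

/-- A function `S(d,v) → ℂ` is polynomial if it is given by a polynomial in the
matrix entries. -/
def IsPolyFun (Q : QuiverShape I Hh) {d v : I → ℕ} (f : Q.Rep d v → ℂ) : Prop :=
  ∃ P : MvPolynomial (Q.Coord d v) ℂ, ∀ s, f s = MvPolynomial.eval (Q.coords s) P

/-- The character `χ_m(g) = ∏ᵢ det(gᵢ)^{mᵢ}`. -/
def chi [Fintype I] {v : I → ℕ} (m : I → ℤ) (g : GV v) : ℂ :=
  ∏ i, ((g i : Matrix (Fin (v i)) (Fin (v i)) ℂ).det) ^ (m i)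

/-- `χ_m`-semistability. -/
def Semistable (Q : QuiverShape I Hh) [Fintype I] {d v : I → ℕ} (m : I → ℤ)
    (s : Q.Rep d v) : Prop :=
  ∃ n : ℕ, 0 < n ∧ ∃ f : Q.Rep d v → ℂ, Q.IsPolyFun f ∧
      (∀ (g : GV v) (t : Q.Rep d v), f (Q.act g t) = (chi m g) ^ n * f t) ∧ f s ≠ 0

/-- `a_{ij}` = number of arrows from `i` to `j`. -/
def aCount (Q : QuiverShape I Hh) (i j : I) : ℕ :=
  Nat.card {h : Hh // Q.src h = i ∧ Q.tgt h = j}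

/-- The generalized Cartan matrix `c_{ij} = 2δ_{ij} - a_{ij}`. -/
def cartan (Q : QuiverShape I Hh) [DecidableEq I] (i j : I) : ℤ :=
  2 * (if i = j then 1 else 0) - (Q.aCount i j : ℤ)

/-- `T_i = D_i ⊕ ⊕_{h : h₁ = i} V_{h₀}`. -/
abbrev TSpace (Q : QuiverShape I Hh) (d v : I → ℕ) (i : I) : Type :=
  (Fin (d i) → ℂ) × ((h : {h : Hh // Q.tgt h = i}) → (Fin (v (Q.src h.1)) → ℂ))

/-- Transport between coordinate spaces of equal dimensions. -/
def vcast {m n : ℕ} (hmn : m = n) : (Fin m → ℂ) ≃ₗ[ℂ] (Fin n → ℂ) :=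
  LinearEquiv.funCongrLeft ℂ ℂ (finCongr hmn.symm)

/-- `a_i(s) = (δ_i, (B_{h̄})_{h : h₁ = i}) : V_i → T_i`. -/
def aMap (Q : QuiverShape I Hh) [DecidableEq I] {d v : I → ℕ}
    (s : Q.Rep d v) (i : I) : (Fin (v i) → ℂ) →ₗ[ℂ] Q.TSpace d v i :=
  LinearMap.prod (Matrix.mulVecLin (s.2.2 i))
    (LinearMap.pi fun h =>
      Matrix.mulVecLin (Q.Bbar s h.1) ∘ₗ (vcast (congrArg v h.2)).symm.toLinearMap)

/-- `b_i(s) = (γ_i, (ε(h) B_h)_{h : h₁ = i}) : T_i → V_i`. -/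
def bMap (Q : QuiverShape I Hh) [Fintype Hh] [DecidableEq I] {d v : I → ℕ}
    (s : Q.Rep d v) (i : I) : Q.TSpace d v i →ₗ[ℂ] (Fin (v i) → ℂ) :=
  (Matrix.mulVecLin (s.2.1 i)).comp (LinearMap.fst ℂ _ _) +
    ∑ h : {h : Hh // Q.tgt h = i},
      Q.eps h.1 •
        ((vcast (congrArg v h.2)).toLinearMap ∘ₗ Matrix.mulVecLin (s.1 h.1) ∘ₗ
          (LinearMap.proj h) ∘ₗ (LinearMap.snd ℂ _ _))

/-- The canonical identification `T_i(d,v') = T_i(d,v)` when `v'` agrees with `v`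
away from `i` (and the graph has no loops). -/
def Tcast (Q : QuiverShape I Hh) {d v v' : I → ℕ} (i : I)
    (hv' : ∀ j, j ≠ i → v' j = v j) : Q.TSpace d v' i ≃ₗ[ℂ] Q.TSpace d v i :=
  (LinearEquiv.refl ℂ (Fin (d i) → ℂ)).prodCongr
    (LinearEquiv.piCongrRight fun (h : {h : Hh // Q.tgt h = i}) =>
      vcast (hv' (Q.src h.1) (fun he => Q.noloop h.1 (he.trans h.2.symm))))

/-- Exactness of `0 → M₁ → M₂ → M₃ → 0`. -/
def ShortExact {M₁ M₂ M₃ : Type} [AddCommGroup M₁] [Module ℂ M₁] [AddCommGroup M₂]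
    [Module ℂ M₂] [AddCommGroup M₃] [Module ℂ M₃]
    (f : M₁ →ₗ[ℂ] M₂) (g : M₂ →ₗ[ℂ] M₃) : Prop :=
  Function.Injective f ∧ Function.Surjective g ∧ LinearMap.range f = LinearMap.ker g

/-- Conditions (1)–(5) defining `Z_i^λ(d,v)`. -/
def ZConds (Q : QuiverShape I Hh) [Fintype Hh] [DecidableEq I] {d v v' : I → ℕ} (i : I)
    (hv' : ∀ j, j ≠ i → v' j = v j) (lam : I → ℂ)
    (s : Q.Rep d v) (s' : Q.Rep d v') : Prop :=
  (∀ h (hs : Q.src h ≠ i) (ht : Q.tgt h ≠ i),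
      s.1 h = Matrix.reindex (finCongr (hv' _ ht)) (finCongr (hv' _ hs)) (s'.1 h)) ∧
  (∀ j (hj : j ≠ i),
      s.2.1 j = Matrix.reindex (finCongr (hv' j hj)) (Equiv.refl _) (s'.2.1 j)) ∧
  (∀ j (hj : j ≠ i),
      s.2.2 j = Matrix.reindex (Equiv.refl _) (finCongr (hv' j hj)) (s'.2.2 j)) ∧
  ShortExact ((Q.Tcast i hv').toLinearMap ∘ₗ Q.aMap s' i) (Q.bMap s i) ∧
  ((Q.Tcast i hv').toLinearMap ∘ₗ (Q.aMap s' i ∘ₗ Q.bMap s' i) ∘ₗ (Q.Tcast i hv').symm.toLinearMap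
      = Q.aMap s i ∘ₗ Q.bMap s i - lam i • LinearMap.id)

/-- The variety `Z_i^λ(d,v)`: conditions (1)–(5) together with condition (6). -/
def ZRel (Q : QuiverShape I Hh) [Fintype Hh] [DecidableEq I] {d v v' : I → ℕ} (i : I)
    (hv' : ∀ j, j ≠ i → v' j = v j) (lam lam' : I → ℂ)
    (s : Q.Rep d v) (s' : Q.Rep d v') : Prop :=
  Q.ZConds i hv' lam s s' ∧ s ∈ Q.lamSet lam d v ∧ s' ∈ Q.lamSet lam' d v'

end QuiverShape

end

/-!
Write `a, b` for `a_i(s), b_i(s)` and `a', b'` for `a_i(s'), b_i(s')` transported to `T_i`.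
Exactness gives `b a' = 0`, so composing (5) with `b` on the left gives `μ_i(s) b = λ_i b`, and
composing it with `a'` on the right gives `a' μ_i(s') = -λ_i a'`. As `b` is onto and `a'` is one to
one, `μ_i(s) = λ_i` and `μ_i(s') = -λ_i = λ'_i` hold without assuming (6).

At a vertex `j ≠ i`, the term `γ_j δ_j` of `μ_j` and its summands coming from arrows `h : k → j`
with `k ≠ i` agree for `s` and `s'` by (1)–(3). For an arrow `h : i → j`, the summand
`ε(h) B_h B_{h̄}` is, up to sign, the diagonal block of `a b` at the summand `V_j` of `T_i` indexed
by `h̄`, so (5) shifts it by `λ_i`. Hence `μ_j(s') = μ_j(s) + a_{ij} λ_i`, matching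
`λ'_j = λ_j + a_{ij} λ_i`.
-/

namespace LinearMap

variable {R V V' T : Type*} [CommRing R] [AddCommGroup V] [Module R V] [AddCommGroup V']
  [Module R V'] [AddCommGroup T] [Module R T]
  {a : V →ₗ[R] T} {b : T →ₗ[R] V} {a' : V' →ₗ[R] T} {b' : T →ₗ[R] V'} {c : R}

theorem comp_eq_smul_id_of_surjective (h : a' ∘ₗ b' = a ∘ₗ b - c • id)
    (hba' : b ∘ₗ a' = 0) (hb : Function.Surjective b) : b ∘ₗ a = c • id := by
  ext x
  obtain ⟨y, rfl⟩ := hb x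
  calc b (a (b y)) = b (a' (b' y)) + c • b y := by simp [← comp_apply a', h]
    _ = c • b y := by simp [← comp_apply b a', hba']

theorem comp_eq_neg_smul_id_of_injective (h : a' ∘ₗ b' = a ∘ₗ b - c • id)
    (hba' : b ∘ₗ a' = 0) (ha' : Function.Injective a') : b' ∘ₗ a' = (-c) • id := by
  ext x
  apply ha'
  calc a' (b' (a' x)) = a (b (a' x)) - c • a' x := by simp [← comp_apply a', h]
    _ = a' ((-c) • x) := by simp [← comp_apply b a', hba']

end LinearMap

namespace QuiverShape

theorem ShortExact.comp_eq_zero {M₁ M₂ M₃ : Type} [AddCommGroup M₁] [Module ℂ M₁]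
    [AddCommGroup M₂] [Module ℂ M₂] [AddCommGroup M₃] [Module ℂ M₃]
    {f : M₁ →ₗ[ℂ] M₂} {g : M₂ →ₗ[ℂ] M₃} (h : ShortExact f g) : g ∘ₗ f = 0 :=
  LinearMap.range_le_ker_iff.mp h.2.2.le

variable {I Hh : Type} {Q : QuiverShape I Hh} {d v v' : I → ℕ}

section Arrows

theorem src_ne {i : I} (k : {h : Hh // Q.tgt h = i}) : Q.src k.1 ≠ i :=
  fun he => Q.noloop k.1 (he.trans k.2.symm)

theorem rep_fst_congr (s : Q.Rep d v) {h h' : Hh} (e : h = h') :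
    s.1 h = Matrix.reindex (finCongr (congrArg (v ∘ Q.tgt) e.symm))
      (finCongr (congrArg (v ∘ Q.src) e.symm)) (s.1 h') := by
  subst e
  simp

theorem Bbar_rev_mul (s : Q.Rep d v) (h : Hh) :
    Q.Bbar s (Q.rev h) * s.1 (Q.rev h) =
      Matrix.reindex (finCongr (congrArg v (Q.src_rev h).symm))
        (finCongr (congrArg v (Q.src_rev h).symm)) (s.1 h * Q.Bbar s h) := by
  ext a b
  simp only [Bbar, rep_fst_congr s (Q.rev_rev h), Matrix.mul_apply, Matrix.reindex_apply,
    Matrix.submatrix_apply]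
  refine Fintype.sum_equiv (finCongr (congrArg v (Q.tgt_rev h))) _ _ fun m => ?_
  simp [finCongr_apply, Fin.cast_cast]

variable [DecidableEq I]

theorem cartan_self (Q : QuiverShape I Hh) (i : I) : Q.cartan i i = 2 := by
  have : IsEmpty {h : Hh // Q.src h = i ∧ Q.tgt h = i} :=
    ⟨fun h => Q.noloop h.1 (h.2.1.trans h.2.2.symm)⟩
  simp [cartan, aCount]

theorem cartan_of_ne (Q : QuiverShape I Hh) {i j : I} (hij : i ≠ j) :
    Q.cartan i j = -Q.aCount i j := by
  simp [cartan, hij]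

theorem card_filter_src_eq [Fintype Hh] (Q : QuiverShape I Hh) (i j : I) :
    (Finset.univ.filter fun k : {h : Hh // Q.tgt h = j} => Q.src k.1 = i).card =
      Q.aCount i j := by
  rw [aCount, Nat.card_eq_fintype_card, ← Fintype.card_subtype]
  exact Fintype.card_congr ⟨fun k => ⟨k.1.1, k.2, k.1.2⟩, fun h => ⟨⟨h.1, h.2.2⟩, h.2.1⟩,
    fun _ => rfl, fun _ => rfl⟩

end Arrows

section MomentMap

variable [DecidableEq I] [Fintype Hh]

theorem mulVecLin_mu (s : Q.Rep d v) (i : I) :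
    (Q.mu s i).mulVecLin = Q.bMap s i ∘ₗ Q.aMap s i := by
  refine LinearMap.ext fun x => ?_
  simp only [mu, bMap, aMap, LinearMap.comp_apply, Matrix.mulVecLin_apply, Matrix.add_mulVec,
    LinearMap.add_apply, LinearMap.sum_apply, Matrix.sum_mulVec, LinearMap.prod_apply]
  rw [add_comm]
  congr 1
  · simp [Matrix.mulVec_mulVec]
  · refine Finset.sum_congr rfl fun h _ => ?_
    rw [Matrix.reindex_apply, Matrix.smul_mulVec, Matrix.submatrix_mulVec_equiv,
      ← Matrix.mulVec_mulVec]
    rfl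

theorem mu_eq_smul_one_iff (s : Q.Rep d v) (i : I) (c : ℂ) :
    Q.mu s i = c • 1 ↔ Q.bMap s i ∘ₗ Q.aMap s i = c • LinearMap.id := by
  rw [← Matrix.toLin'.injective.eq_iff, Matrix.toLin'_apply', mulVecLin_mu, map_smul,
    Matrix.toLin'_one]

theorem mem_lamSet_iff_forall_ne {lam : I → ℂ} {s : Q.Rep d v} {i : I}
    (hs : Q.mu s i = lam i • 1) :
    s ∈ Q.lamSet lam d v ↔ ∀ j, j ≠ i → Q.mu s j = lam j • 1 :=
  ⟨fun h j _ => h j, fun h j => if hj : j = i then hj ▸ hs else h j hj⟩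

end MomentMap

section Blocks

variable {i : I}

theorem aMap_apply_snd [DecidableEq I] (s : Q.Rep d v) (k : {h : Hh // Q.tgt h = i})
    (y : Fin (v i) → ℂ) :
    (Q.aMap s i y).2 k = (Q.Bbar s k.1).mulVec ((vcast (congrArg v k.2)).symm y) := rfl

theorem Tcast_apply_snd (hv' : ∀ j, j ≠ i → v' j = v j) (y : Q.TSpace d v' i)
    (k : {h : Hh // Q.tgt h = i}) :
    (Q.Tcast i hv' y).2 k = vcast (hv' _ (src_ne k)) (y.2 k) := rfl

variable [DecidableEq Hh]

theorem bMap_apply_single [DecidableEq I] [Fintype Hh] (s : Q.Rep d v)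
    (k : {h : Hh // Q.tgt h = i}) (x : Fin (v (Q.src k.1)) → ℂ) :
    Q.bMap s i (0, Pi.single k x) = Q.eps k.1 • vcast (congrArg v k.2) ((s.1 k.1).mulVec x) := by
  simp only [bMap, LinearMap.add_apply, LinearMap.comp_apply, LinearMap.fst_apply, map_zero,
    zero_add, LinearMap.sum_apply, LinearMap.smul_apply, LinearMap.snd_apply,
    LinearMap.proj_apply]
  refine (Fintype.sum_eq_single k fun k' hk' => ?_).trans ?_
  · simp [Pi.single_eq_of_ne hk']
  · simp

theorem Tcast_symm_apply_single (hv' : ∀ j, j ≠ i → v' j = v j) (k : {h : Hh // Q.tgt h = i})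
    (x : Fin (v (Q.src k.1)) → ℂ) :
    (Q.Tcast i hv').symm ((0, Pi.single k x) : Q.TSpace d v i) =
      (0, Pi.single k ((vcast (hv' _ (src_ne k))).symm x)) := by
  simp only [Tcast, LinearEquiv.prodCongr_symm, LinearEquiv.prodCongr_apply,
    LinearEquiv.piCongrRight_symm, map_zero]
  ext1
  · rfl
  · funext k'
    exact Pi.apply_single (fun k' => (vcast (hv' _ (src_ne k'))).symm) (fun _ => map_zero _) k x k'

-- Evaluate (5) on the summand `V_{k₀}` of `T_i` and project back onto it.
theorem eps_smul_Bbar_mul_of_comp_eq [DecidableEq I] [Fintype Hh]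
    {hv' : ∀ j, j ≠ i → v' j = v j} {lam : I → ℂ} {s : Q.Rep d v} {s' : Q.Rep d v'}
    (h5 : (Q.Tcast i hv').toLinearMap ∘ₗ (Q.aMap s' i ∘ₗ Q.bMap s' i) ∘ₗ
        (Q.Tcast i hv').symm.toLinearMap = Q.aMap s i ∘ₗ Q.bMap s i - lam i • LinearMap.id)
    (k : {h : Hh // Q.tgt h = i}) :
    Q.eps k.1 • Matrix.reindex (finCongr (hv' _ (src_ne k))) (finCongr (hv' _ (src_ne k)))
        (Q.Bbar s' k.1 * s'.1 k.1) =
      Q.eps k.1 • (Q.Bbar s k.1 * s.1 k.1) - lam i • 1 := by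
  refine Matrix.toLin'.injective (LinearMap.ext fun x => ?_)
  have hk := congr(($h5 (0, Pi.single k x)).2 k)
  simp only [LinearMap.comp_apply, LinearEquiv.coe_coe, LinearMap.sub_apply,
    LinearMap.smul_apply, LinearMap.id_apply, Tcast_symm_apply_single, bMap_apply_single,
    map_smul, Prod.smul_snd, Pi.smul_apply, Tcast_apply_snd, aMap_apply_snd,
    LinearEquiv.symm_apply_apply, Prod.snd_sub, Pi.sub_apply, Pi.single_eq_same] at hk
  simp only [Matrix.toLin'_apply, Matrix.reindex_apply, Matrix.sub_mulVec, Matrix.smul_mulVec,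
    Matrix.submatrix_mulVec_equiv, ← Matrix.mulVec_mulVec, Matrix.one_mulVec]
  exact hk

end Blocks

namespace ZConds

variable [DecidableEq I] [Fintype Hh] {i : I} {hv' : ∀ j, j ≠ i → v' j = v j} {lam : I → ℂ}
  {s : Q.Rep d v} {s' : Q.Rep d v'}

theorem mu_left_eq (hZ : Q.ZConds i hv' lam s s') : Q.mu s i = lam i • 1 := by
  obtain ⟨-, -, -, hex, h5⟩ := hZ
  rw [mu_eq_smul_one_iff]
  refine LinearMap.comp_eq_smul_id_of_surjective
    (b' := Q.bMap s' i ∘ₗ (Q.Tcast i hv').symm.toLinearMap) ?_ hex.comp_eq_zero hex.2.1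
  simpa only [LinearMap.comp_assoc] using h5

theorem mu_right_eq (hZ : Q.ZConds i hv' lam s s') : Q.mu s' i = (-lam i) • 1 := by
  obtain ⟨-, -, -, hex, h5⟩ := hZ
  rw [mu_eq_smul_one_iff]
  have := LinearMap.comp_eq_neg_smul_id_of_injective
    (b' := Q.bMap s' i ∘ₗ (Q.Tcast i hv').symm.toLinearMap)
    (by simpa only [LinearMap.comp_assoc] using h5) hex.comp_eq_zero hex.1
  simpa [LinearMap.comp_assoc] using this

theorem mul_Bbar_of_src_ne (hZ : Q.ZConds i hv' lam s s') {h : Hh} (hs : Q.src h ≠ i)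
    (ht : Q.tgt h ≠ i) :
    s.1 h * Q.Bbar s h =
      Matrix.reindex (finCongr (hv' _ ht)) (finCongr (hv' _ ht)) (s'.1 h * Q.Bbar s' h) := by
  have hrev := hZ.1 (Q.rev h) (by rwa [Q.src_rev]) (by rwa [Q.tgt_rev])
  ext a b
  simp only [Bbar, hZ.1 h hs ht, hrev, Matrix.mul_apply, Matrix.reindex_apply,
    Matrix.submatrix_apply]
  refine Fintype.sum_equiv (finCongr (hv' _ hs).symm) _ _ fun m => ?_
  simp [finCongr_apply, Fin.cast_cast]

variable [DecidableEq Hh]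

-- `h̄` ends at `i`, and the diagonal block of `a_i b_i` at `h̄` is `ε(h̄) B_h B_{h̄}`.
theorem eps_smul_mul_Bbar_of_src_eq (hZ : Q.ZConds i hv' lam s s') {h : Hh} (hs : Q.src h = i)
    (ht : Q.tgt h ≠ i) :
    Q.eps h • Matrix.reindex (finCongr (hv' _ ht)) (finCongr (hv' _ ht)) (s'.1 h * Q.Bbar s' h) =
      Q.eps h • (s.1 h * Q.Bbar s h) + lam i • 1 := by
  have hb := eps_smul_Bbar_mul_of_comp_eq hZ.2.2.2.2 ⟨Q.rev h, by rw [Q.tgt_rev, hs]⟩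
  simp only [Bbar_rev_mul, eps_rev] at hb
  ext a b
  have hab := congr($hb (Fin.cast (congrArg v (Q.src_rev h).symm) a)
    (Fin.cast (congrArg v (Q.src_rev h).symm) b))
  simp only [Matrix.reindex_apply, finCongr_symm, Matrix.submatrix_submatrix, Matrix.smul_apply,
    Matrix.submatrix_apply, Function.comp_apply, finCongr_apply, Fin.cast_cast, smul_eq_mul,
    neg_mul, neg_smul, Matrix.sub_apply, Matrix.neg_apply, Fin.cast_eq_self, Matrix.one_apply,
    Fin.cast_inj, mul_ite, mul_one, mul_zero, Matrix.add_apply] at hab ⊢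
  linear_combination -hab

theorem eps_smul_mul_Bbar (hZ : Q.ZConds i hv' lam s s') {h : Hh} (ht : Q.tgt h ≠ i) :
    Q.eps h • Matrix.reindex (finCongr (hv' _ ht)) (finCongr (hv' _ ht)) (s'.1 h * Q.Bbar s' h) =
      Q.eps h • (s.1 h * Q.Bbar s h) + (if Q.src h = i then lam i else 0) • 1 := by
  by_cases hs : Q.src h = i
  · simpa [hs] using hZ.eps_smul_mul_Bbar_of_src_eq hs ht
  · simp [hs, hZ.mul_Bbar_of_src_ne hs ht]

theorem reindex_mu_right_of_ne (hZ : Q.ZConds i hv' lam s s') {j : I} (hj : j ≠ i) :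
    Matrix.reindex (finCongr (hv' j hj)) (finCongr (hv' j hj)) (Q.mu s' j) =
      Q.mu s j + ((Q.aCount i j : ℂ) * lam i) • 1 := by
  ext a b
  have arrow (k : {h : Hh // Q.tgt h = j}) :=
    congr($(hZ.eps_smul_mul_Bbar (h := k.1) (k.2.trans_ne hj))
      (Fin.cast (congrArg v k.2.symm) a) (Fin.cast (congrArg v k.2.symm) b))
  have framing : (s'.2.1 j * s'.2.2 j) (Fin.cast (hv' j hj).symm a) (Fin.cast (hv' j hj).symm b) =
      (s.2.1 j * s.2.2 j) a b := by
    simp [hZ.2.1 j hj, hZ.2.2.1 j hj, Matrix.mul_apply]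
  simp only [Matrix.smul_apply, Matrix.add_apply, Matrix.reindex_apply, Matrix.submatrix_apply,
    finCongr_symm, finCongr_apply, Fin.cast_cast, smul_eq_mul, Matrix.one_apply, Fin.cast_inj]
    at arrow
  simp only [mu, Matrix.add_apply, Matrix.sum_apply, Matrix.smul_apply, Matrix.reindex_apply,
    Matrix.submatrix_apply, finCongr_symm, finCongr_apply, Fin.cast_cast, smul_eq_mul, arrow,
    framing, Finset.sum_add_distrib, Matrix.one_apply]
  rw [← Finset.sum_mul, ← Finset.sum_filter, Finset.sum_const, card_filter_src_eq, nsmul_eq_mul]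
  ring

theorem mu_eq_smul_one_iff_of_ne (hZ : Q.ZConds i hv' lam s s') {j : I} (hj : j ≠ i)
    {c c' : ℂ} (hc : c' = c + Q.aCount i j * lam i) :
    Q.mu s j = c • 1 ↔ Q.mu s' j = c' • 1 := by
  have hone : Matrix.reindex (finCongr (hv' j hj)) (finCongr (hv' j hj)) (c' • 1) =
      c' • (1 : Matrix (Fin (v j)) (Fin (v j)) ℂ) := by
    simp [Matrix.submatrix_smul]
  rw [← (Matrix.reindex (finCongr (hv' j hj)) (finCongr (hv' j hj))).injective.eq_iff,
    hZ.reindex_mu_right_of_ne hj, hone, hc, add_smul, add_left_inj]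

end ZConds

end QuiverShape

theorem mem_lamSet_iff_of_ZConds_general
    {I Hh : Type} [DecidableEq I] [Fintype Hh]
    (Q : QuiverShape I Hh) (d v v' : I → ℕ) (lam lam' : I → ℂ) (i : I)
    (hv' : ∀ j, j ≠ i → v' j = v j)
    (hlam' : ∀ j, lam' j = lam j - (Q.cartan i j : ℂ) * lam i)
    (s : Q.Rep d v) (s' : Q.Rep d v')
    (hZ : Q.ZConds i hv' lam s s') :
    (s ∈ Q.lamSet lam d v ↔ s' ∈ Q.lamSet lam' d v') ∧
    ((∀ j, j ≠ i → Q.mu s j = lam j • (1 : Matrix (Fin (v j)) (Fin (v j)) ℂ)) →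
      s ∈ Q.lamSet lam d v) ∧
    ((∀ j, j ≠ i → Q.mu s' j = lam' j • (1 : Matrix (Fin (v' j)) (Fin (v' j)) ℂ)) →
      s' ∈ Q.lamSet lam' d v') := by
  classical
  have hs'_i : Q.mu s' i = lam' i • 1 := by
    rw [hZ.mu_right_eq, hlam', Q.cartan_self]
    ring_nf
  have hs_j (j : I) (hj : j ≠ i) : Q.mu s j = lam j • 1 ↔ Q.mu s' j = lam' j • 1 :=
    hZ.mu_eq_smul_one_iff_of_ne hj (by rw [hlam', Q.cartan_of_ne (Ne.symm hj)]; push_cast; ring)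
  rw [QuiverShape.mem_lamSet_iff_forall_ne hZ.mu_left_eq,
    QuiverShape.mem_lamSet_iff_forall_ne hs'_i]
  exact ⟨forall₂_congr hs_j, id, id⟩

theorem mem_lamSet_iff_of_ZConds
    {I Hh : Type} [Fintype I] [DecidableEq I] [Fintype Hh] [DecidableEq Hh]
    (Q : QuiverShape I Hh) (d v v' : I → ℕ) (lam lam' : I → ℂ) (i : I)
    (hv' : ∀ j, j ≠ i → v' j = v j)
    (hvi : (v' i : ℤ) = (d i : ℤ) - (v i : ℤ) +
      ∑ j ∈ Finset.univ.filter (fun j => j ≠ i), (Q.aCount i j : ℤ) * (v j : ℤ))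
    (hlam' : ∀ j, lam' j = lam j - (Q.cartan i j : ℂ) * lam i)
    (s : Q.Rep d v) (s' : Q.Rep d v')
    (hZ : Q.ZConds i hv' lam s s') :
    (s ∈ Q.lamSet lam d v ↔ s' ∈ Q.lamSet lam' d v') ∧
    ((∀ j, j ≠ i → Q.mu s j = lam j • (1 : Matrix (Fin (v j)) (Fin (v j)) ℂ)) →
      s ∈ Q.lamSet lam d v) ∧
    ((∀ j, j ≠ i → Q.mu s' j = lam' j • (1 : Matrix (Fin (v' j)) (Fin (v' j)) ℂ)) →
      s' ∈ Q.lamSet lam' d v') :=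
  mem_lamSet_iff_of_ZConds_general Q d v v' lam lam' i hv' hlam' s s' hZ
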